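/- Let N_T, N_R, M ∈ ℕ with M ≥ 1, let σ² > 0, let 0 ≤ η ≤ 1, and let γ_1, …, γ_M be nonnegative reals. Let p_1, …, p_M ∈ ℂ^{N_R} with p_1 a unit vector (p_1^H p_1 = 1), and let f_R, q_1, …, q_M ∈ ℂ^{N_T} be an orthonormal family (pairwise orthogonal, each of unit norm). Define the channel H = ∑_{m=1}^{M} √γ_m · p_m q_m^H ∈ ℂ^{N_R × N_T}, the analog beamformer F_RF = [f_R, q_1] ∈ ℂ^{N_T × 2}, and the baseband beamformer F_BB = diag(1−η, η) ∈ ℂ^{2 × 2}. Then the mutual information M = log₂( det( I_{N_R} + (1/σ²)·H F_RF F_BB F_BB^H F_RF^H H^H ) ) satisfies M = log₂( 1 + η²γ₁/σ² ). -/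

import Mathlib

/-!
Orthonormality of `f_R, q_1, …, q_M` makes the channel annihilate the radar beam, `H f_R = 0`,
and pick out the strongest path, `H q_1 = √γ₁ p_1`. Hence `H F_RF F_BB = η √γ₁ p_1 e₂ᵀ` has
rank one, its Gram matrix is `η² γ₁ p_1 p_1ᴴ`, and the matrix determinant lemma
`det (I + u vᵀ) = 1 + vᵀ u` together with `p_1ᴴ p_1 = 1` gives `1 + η² γ₁ / σ²`.
-/

open Matrix

namespace Matrix

variable {ι l m n R : Type*} [CommRing R]

theorem det_one_add_smul_vecMulVec [Fintype m] [DecidableEq m] (c : R) (u v : m → R) :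
    det (1 + c • vecMulVec u v) = 1 + c * (v ⬝ᵥ u) := by
  rw [← smul_vecMulVec, vecMulVec_eq Unit, det_one_add_replicateCol_mul_replicateRow,
    dotProduct_smul, smul_eq_mul]

theorem vecMulVec_mul_conjTranspose_self [Fintype n] [StarRing R] (u : l → R) (w : n → R) :
    vecMulVec u w * (vecMulVec u w)ᴴ = (w ⬝ᵥ star w) • vecMulVec u (star u) := by
  rw [conjTranspose_vecMulVec, vecMulVec_mul_vecMulVec, vecMulVec_smul]

theorem of_ite_fin_two_eq_vecMulVec_add (a b : n → R) :
    (of fun j k => if k = 0 then a j else b j) = vecMulVec a ![1, 0] + vecMulVec b ![0, 1] := by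
  ext j k
  fin_cases k <;> simp

section

variable [Fintype ι] [Fintype n]

theorem sum_smul_vecMulVec_mulVec (c : ι → R) (p : ι → l → R) (r : ι → n → R) (v : n → R) :
    (∑ i, c i • vecMulVec (p i) (r i)) *ᵥ v = ∑ i, (c i * (r i ⬝ᵥ v)) • p i := by
  simp only [sum_mulVec, smul_mulVec, vecMulVec_mulVec, op_smul_eq_smul, smul_smul]

theorem sum_smul_vecMulVec_mulVec_of_dotProduct_eq_ite [DecidableEq ι] (c : ι → R)
    (p : ι → l → R) (r : ι → n → R) {v : n → R} {k : ι}
    (hv : ∀ i, r i ⬝ᵥ v = if i = k then 1 else 0) :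
    (∑ i, c i • vecMulVec (p i) (r i)) *ᵥ v = c k • p k := by
  simp [sum_smul_vecMulVec_mulVec, hv]

theorem sum_smul_vecMulVec_mulVec_of_dotProduct_eq_zero (c : ι → R)
    (p : ι → l → R) (r : ι → n → R) {v : n → R} (hv : ∀ i, r i ⬝ᵥ v = 0) :
    (∑ i, c i • vecMulVec (p i) (r i)) *ᵥ v = 0 := by
  simp [sum_smul_vecMulVec_mulVec, hv]

end

end Matrix

theorem mmWave_ISAC_mutual_information_general
    (NT NR M : ℕ) (hM : 1 ≤ M) (σ2 : ℝ)
    (η : ℝ)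
    (γ : Fin M → ℝ) (hγ : ∀ m, 0 ≤ γ m)
    (p : Fin M → (Fin NR → ℂ))
    (hp1 : ∑ i : Fin NR, star (p ⟨0, hM⟩ i) * p ⟨0, hM⟩ i = 1)
    (fR : Fin NT → ℂ) (q : Fin M → (Fin NT → ℂ))
    (hq : ∀ m k : Fin M,
      ∑ j : Fin NT, star (q m j) * q k j = if m = k then 1 else 0)
    (hfRq : ∀ m : Fin M, ∑ j : Fin NT, star (fR j) * q m j = 0)
    (H : Matrix (Fin NR) (Fin NT) ℂ)
    (hH : H = ∑ m : Fin M,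
      (Real.sqrt (γ m) : ℂ) • Matrix.vecMulVec (p m) (fun j => star (q m j)))
    (FRF : Matrix (Fin NT) (Fin 2) ℂ)
    (hFRF : FRF = Matrix.of fun j k => if k = 0 then fR j else q ⟨0, hM⟩ j)
    (FBB : Matrix (Fin 2) (Fin 2) ℂ)
    (hFBB : FBB = Matrix.diagonal ![((1 - η : ℝ) : ℂ), (η : ℂ)]) :
    Real.logb 2
        (Matrix.det (1 + ((σ2 : ℂ))⁻¹ • (H * FRF * FBB * FBBᴴ * FRFᴴ * Hᴴ))).re
      = Real.logb 2 (1 + η ^ 2 * γ ⟨0, hM⟩ / σ2) := by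
  set m₀ : Fin M := ⟨0, hM⟩
  have hH' : H = ∑ m, (√(γ m) : ℂ) • vecMulVec (p m) (star (q m)) := hH
  have hHq : H *ᵥ q m₀ = (√(γ m₀) : ℂ) • p m₀ := by
    rw [hH']
    exact sum_smul_vecMulVec_mulVec_of_dotProduct_eq_ite _ _ _ fun m => hq m m₀
  have hHfR : H *ᵥ fR = 0 := by
    rw [hH']
    refine sum_smul_vecMulVec_mulVec_of_dotProduct_eq_zero _ _ _ fun m => ?_
    rw [star_dotProduct]
    exact (congrArg star (hfRq m)).trans (star_zero ℂ)
  have hX : H * FRF * FBB = vecMulVec ((√(γ m₀) : ℂ) • p m₀) ![0, (η : ℂ)] := by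
    rw [hFRF, of_ite_fin_two_eq_vecMulVec_add, Matrix.mul_add, mul_vecMulVec, mul_vecMulVec,
      hHfR, hHq, zero_vecMulVec, zero_add, hFBB, vecMulVec_mul]
    congr 1
    ext k
    fin_cases k <;> simp [vecMul_diagonal]
  have hgram : H * FRF * FBB * FBBᴴ * FRFᴴ * Hᴴ = (H * FRF * FBB) * (H * FRF * FBB)ᴴ := by
    simp only [conjTranspose_mul, Matrix.mul_assoc]
  have hη : ![0, (η : ℂ)] ⬝ᵥ star ![0, (η : ℂ)] = (η ^ 2 : ℝ) := by
    simp [dotProduct, sq]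
  have hgain : star ((√(γ m₀) : ℂ) • p m₀) ⬝ᵥ ((√(γ m₀) : ℂ) • p m₀) = (γ m₀ : ℂ) := by
    have hp : star (p m₀) ⬝ᵥ p m₀ = 1 := hp1
    rw [star_smul, smul_dotProduct, dotProduct_smul, hp, smul_eq_mul, smul_eq_mul, mul_one,
      Complex.star_def, Complex.conj_ofReal, ← Complex.ofReal_mul, Real.mul_self_sqrt (hγ m₀)]
  rw [hgram, hX, vecMulVec_mul_conjTranspose_self, smul_smul, det_one_add_smul_vecMulVec,
    hη, hgain]
  norm_cast
  ring_nf

/-- Finite-dimensional, orthonormal-steering form of Proposition 1: for the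
mmWave channel `H = ∑_m √γ_m · p_m q_mᴴ`, analog beamformer `F_RF = [f_R, q_1]`
with `(f_R, q_1, …, q_M)` orthonormal, and baseband beamformer
`F_BB = diag(1−η, η)`, the mutual information
`log₂ det(I + (1/σ²)·H F_RF F_BB F_BBᴴ F_RFᴴ Hᴴ)` equals `log₂(1 + η²γ₁/σ²)`. -/
theorem mmWave_ISAC_mutual_information
    (NT NR M : ℕ) (hM : 1 ≤ M) (σ2 : ℝ) (hσ : 0 < σ2)
    (η : ℝ) (hη0 : 0 ≤ η) (hη1 : η ≤ 1)
    (γ : Fin M → ℝ) (hγ : ∀ m, 0 ≤ γ m)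
    (p : Fin M → (Fin NR → ℂ))
    (hp1 : ∑ i : Fin NR, star (p ⟨0, hM⟩ i) * p ⟨0, hM⟩ i = 1)
    (fR : Fin NT → ℂ) (q : Fin M → (Fin NT → ℂ))
    (hfR : ∑ j : Fin NT, star (fR j) * fR j = 1)
    (hq : ∀ m k : Fin M,
      ∑ j : Fin NT, star (q m j) * q k j = if m = k then 1 else 0)
    (hfRq : ∀ m : Fin M, ∑ j : Fin NT, star (fR j) * q m j = 0)
    (H : Matrix (Fin NR) (Fin NT) ℂ)
    (hH : H = ∑ m : Fin M,
      (Real.sqrt (γ m) : ℂ) • Matrix.vecMulVec (p m) (fun j => star (q m j)))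
    (FRF : Matrix (Fin NT) (Fin 2) ℂ)
    (hFRF : FRF = Matrix.of fun j k => if k = 0 then fR j else q ⟨0, hM⟩ j)
    (FBB : Matrix (Fin 2) (Fin 2) ℂ)
    (hFBB : FBB = Matrix.diagonal ![((1 - η : ℝ) : ℂ), (η : ℂ)]) :
    Real.logb 2
        (Matrix.det (1 + ((σ2 : ℂ))⁻¹ • (H * FRF * FBB * FBBᴴ * FRFᴴ * Hᴴ))).re
      = Real.logb 2 (1 + η ^ 2 * γ ⟨0, hM⟩ / σ2) :=
  mmWave_ISAC_mutual_information_general NT NR M hM σ2 η γ hγ p hp1 fR q hq hfRq H hH FRF hFRF FBB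
    hFBB
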